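/- For real u > 0 and real v, the Poisson-type summation identity holds: ∑_{n=−∞}^{∞} e^{−π² n²/(2u)} cos(π n v / u) = √(2u/π) · e^{−v²/(2u)} · ∑_{n=−∞}^{∞} e^{−2 n² u} cosh(2 n v). -/

import Mathlib

/-!
With `a = π / (2u)` and `t = v / (2u)` the left-hand side is the real part of
`∑ exp (-π a n² + 2π i t n)`, which Jacobi's transformation formula (Poisson summation for a
Gaussian) turns into
`a^(-1/2) ∑ exp (-π (n - t)² / a) = √(2u/π) e^(-v²/(2u)) ∑ e^(-2un² + 2nv)`.
Averaging the terms at `n` and `-n` replaces `e^(2nv)` by `cosh (2nv)`.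
-/

open Real Complex

theorem summable_exp_neg_mul_int_sq_add_mul {c : ℝ} (hc : 0 < c) (d : ℝ) :
    Summable fun n : ℤ => rexp (-c * n ^ 2 + d * n) := by
  -- the norm of the Jacobi theta term with `z = -(d / 2π) i`, `τ = (c / π) i`
  have hτ : 0 < (((c / π : ℝ) : ℂ) * I).im := by simpa using div_pos hc pi_pos
  refine ((summable_jacobiTheta₂_term_iff (((-d / (2 * π)) : ℝ) * I) _).mpr hτ).norm.congr
    fun n => ?_
  rw [norm_jacobiTheta₂_term, mul_I_im, mul_I_im, ofReal_re, ofReal_re]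
  field_simp
  ring_nf

theorem tsum_int_eq_tsum_half_add_neg {f : ℤ → ℝ} (hf : Summable f) :
    ∑' n, f n = ∑' n, (f n + f (-n)) / 2 := by
  have hf_neg : Summable fun n => f (-n) := hf.comp_injective neg_injective
  have h_reindex : ∑' n, f (-n) = ∑' n, f n := (Equiv.neg ℤ).tsum_eq f
  rw [tsum_div_const, hf.tsum_add hf_neg, h_reindex]
  ring

theorem tsum_exp_neg_mul_int_sq_add_mul {c : ℝ} (hc : 0 < c) (d : ℝ) :
    ∑' n : ℤ, rexp (-c * n ^ 2 + d * n) =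
      ∑' n : ℤ, rexp (-c * n ^ 2) * Real.cosh (d * n) := by
  rw [tsum_int_eq_tsum_half_add_neg (summable_exp_neg_mul_int_sq_add_mul hc d)]
  refine tsum_congr fun n => ?_
  rw [Real.cosh_eq, Int.cast_neg, neg_sq, mul_neg, Real.exp_add, Real.exp_add]
  ring

theorem neg_quadratic_eq_ofReal_add_mul_I (a t : ℝ) (n : ℤ) :
    (-π * a * n ^ 2 + 2 * π * (t * I) * n : ℂ) =
      ((-π * a * n ^ 2 : ℝ) : ℂ) + ((2 * π * t * n : ℝ) : ℂ) * I := by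
  push_cast
  ring

theorem tsum_exp_neg_mul_int_sq_mul_cos {a : ℝ} (ha : 0 < a) (t : ℝ) :
    ∑' n : ℤ, rexp (-π * a * n ^ 2) * Real.cos (2 * π * t * n) =
      1 / √a * ∑' n : ℤ, rexp (-π / a * (n - t) ^ 2) := by
  have hs : Summable fun n : ℤ => cexp (-π * a * n ^ 2 + 2 * π * (t * I) * n) := by
    refine .of_norm <|
      (summable_exp_neg_mul_int_sq_add_mul (mul_pos pi_pos ha) 0).congr fun n => ?_
    rw [neg_quadratic_eq_ofReal_add_mul_I, Complex.norm_exp, add_re, ofReal_re, mul_I_re,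
      ofReal_im]
    ring_nf
  have hsqrt : 1 / (a : ℂ) ^ (1 / 2 : ℂ) = ((1 / √a : ℝ) : ℂ) := by
    rw [Real.sqrt_eq_rpow, ofReal_div, ofReal_one, ofReal_cpow ha.le]
    norm_num
  have hgauss (n : ℤ) :
      cexp (-π / a * (n + I * (t * I)) ^ 2) = rexp (-π / a * (n - t) ^ 2) := by
    rw [mul_left_comm, I_mul_I]
    push_cast
    ring_nf
  have key := congrArg re (Complex.tsum_exp_neg_quadratic (by rwa [ofReal_re]) (t * I))
  rw [re_tsum hs, hsqrt, tsum_congr hgauss, ← ofReal_tsum, ← ofReal_mul, ofReal_re] at key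
  rw [← key]
  refine tsum_congr fun n => ?_
  rw [neg_quadratic_eq_ofReal_add_mul_I, Complex.exp_re, add_re, add_im, ofReal_re, ofReal_im,
    mul_I_re, mul_I_im, ofReal_re, ofReal_im]
  ring_nf

theorem poisson_summation_identity (u v : ℝ) (hu : 0 < u) :
    (∑' n : ℤ, Real.exp (-(Real.pi ^ 2 * (n : ℝ) ^ 2) / (2 * u)) *
        Real.cos (Real.pi * (n : ℝ) * v / u)) =
      Real.sqrt (2 * u / Real.pi) * Real.exp (-v ^ 2 / (2 * u)) *
        ∑' n : ℤ, Real.exp (-2 * (n : ℝ) ^ 2 * u) * Real.cosh (2 * (n : ℝ) * v) := by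
  have h2u : 0 < 2 * u := by positivity
  have h := tsum_exp_neg_mul_int_sq_mul_cos (div_pos pi_pos h2u) (v / (2 * u))
  calc _ = ∑' n : ℤ,
          rexp (-π * (π / (2 * u)) * n ^ 2) * Real.cos (2 * π * (v / (2 * u)) * n) := by
        refine tsum_congr fun n => ?_
        congr 2 <;> field_simp
    _ = √(2 * u / π) *
          ∑' n : ℤ, rexp (-v ^ 2 / (2 * u)) * rexp (-(2 * u) * n ^ 2 + 2 * v * n) := by
        rw [h, one_div, ← Real.sqrt_inv, inv_div]
        congr 1
        refine tsum_congr fun n => ?_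
        rw [← Real.exp_add]
        congr 1
        field_simp
        ring
    _ = _ := by
        rw [tsum_mul_left, tsum_exp_neg_mul_int_sq_add_mul h2u, mul_assoc]
        congr 3 with n
        ring_nf
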